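/- For the non-stationary switch process starting in state −1, let P₋(t) = P(D(t) = 1 | δ = −1). Then for all s > 0, ℒ(P₋)(s) = Ψ₋(s)(1 − Ψ₊(s)) / ( s (1 − Ψ₊(s) Ψ₋(s)) ). -/

import Mathlib

/-!
The process started in `−1` is in state `+1` exactly at the times `t ∈ [S (2j+1), S (2j+2))`,
where `S k` is the `k`-th switch time. By Tonelli, `ℒ(P₋)(s)` is therefore the expectation of
`∑ j ∫_{S (2j+1)}^{S (2j+2)} e^{-st} dt = ∑ j (e^{-s S (2j+1)} - e^{-s S (2j+2)}) / s`.
By independence `E e^{-s S k} = Ψ₋(s)^⌈k/2⌉ Ψ₊(s)^⌊k/2⌋`, so the `j`-th term has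
expectation `Ψ₋(1 - Ψ₊)/s · (Ψ₊Ψ₋)^j`, and the geometric series converges because
`Ψ₊(s) < 1`.
-/

open MeasureTheory Set ProbabilityTheory
open scoped ENNReal

/-- `switchTime a b k` is the `k`-th switch time when the sojourns alternate
`a 0, b 0, a 1, b 1, …`. -/
def switchTime (a b : ℕ → ℝ) (k : ℕ) : ℝ :=
  ∑ i ∈ Finset.range ((k + 1) / 2), a i + ∑ i ∈ Finset.range (k / 2), b i

section SwitchTime

variable {a b : ℕ → ℝ}

lemma switchTime_two_mul_add_one (j : ℕ) :
    switchTime a b (2 * j + 1) = switchTime a b (2 * j) + a j := by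
  simp only [switchTime, show (2 * j + 1 + 1) / 2 = j + 1 by omega,
    show (2 * j + 1) / 2 = j by omega, show 2 * j / 2 = j by omega, Finset.sum_range_succ]
  ring

lemma switchTime_two_mul_add_two (j : ℕ) :
    switchTime a b (2 * j + 2) = switchTime a b (2 * j + 1) + b j := by
  simp only [switchTime, show (2 * j + 2 + 1) / 2 = j + 1 by omega,
    show (2 * j + 1 + 1) / 2 = j + 1 by omega, show (2 * j + 1) / 2 = j by omega,
    Finset.sum_range_succ]
  ring

lemma switchTime_strictMono (ha : ∀ i, 0 < a i) (hb : ∀ i, 0 < b i) :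
    StrictMono (switchTime a b) := by
  refine strictMono_nat_of_lt_succ fun k => ?_
  obtain ⟨j, rfl | rfl⟩ := Nat.even_or_odd' k
  · linarith [switchTime_two_mul_add_one (a := a) (b := b) j, ha j]
  · linarith [switchTime_two_mul_add_two (a := a) (b := b) j, hb j]

lemma switchTime_pos (ha : ∀ i, 0 < a i) (hb : ∀ i, 0 < b i) {k : ℕ} (hk : k ≠ 0) :
    0 < switchTime a b k := by
  simpa [switchTime] using switchTime_strictMono ha hb (Nat.pos_of_ne_zero hk)

lemma switchTime_nonneg (ha : ∀ i, 0 ≤ a i) (hb : ∀ i, 0 ≤ b i) (k : ℕ) :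
    0 ≤ switchTime a b k :=
  add_nonneg (Finset.sum_nonneg fun i _ => ha i) (Finset.sum_nonneg fun i _ => hb i)

end SwitchTime

/-- The times after an odd number of switches, when `u` lists the switch times. -/
def oddIntervals {α : Type*} [Preorder α] (u : ℕ → α) : Set α :=
  ⋃ j : ℕ, Ico (u (2 * j + 1)) (u (2 * j + 2))

section Counting

variable {α : Type*} [LinearOrder α] {u : ℕ → α} {t : α} {n : ℕ}

lemma sSup_setOf_le_eq_of_mem_Ico (hu : Monotone u) (h : t ∈ Ico (u n) (u (n + 1))) :
    sSup {k | u k ≤ t} = n := by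
  have : {k | u k ≤ t} = Iic n := by
    ext k
    simp only [mem_ofPred_eq, mem_Iic]
    refine ⟨fun hk => ?_, fun hk => (hu hk).trans h.1⟩
    by_contra! hnk
    exact (h.2.trans_le (hu hnk)).not_ge hk
  rw [this, csSup_Iic]

lemma mem_Ico_of_sSup_setOf_le_eq (hn : n ≠ 0) (h : sSup {k | u k ≤ t} = n) :
    t ∈ Ico (u n) (u (n + 1)) := by
  have hbdd : BddAbove {k | u k ≤ t} := by
    by_contra hb
    exact hn (h ▸ Nat.sSup_of_not_bddAbove hb)
  have hne : {k | u k ≤ t}.Nonempty := by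
    by_contra! he
    rw [he, csSup_empty] at h
    exact hn h.symm
  refine ⟨h ▸ Nat.sSup_mem hne hbdd, not_le.1 fun hle => ?_⟩
  have := le_csSup hbdd (show n + 1 ∈ {k | u k ≤ t} from hle)
  omega

lemma odd_sSup_setOf_le_iff (hu : Monotone u) :
    Odd (sSup {k | u k ≤ t}) ↔ t ∈ oddIntervals u := by
  rw [oddIntervals, mem_iUnion]
  exact ⟨fun ⟨j, hj⟩ => ⟨j, mem_Ico_of_sSup_setOf_le_eq (by omega) hj⟩,
    fun ⟨j, hj⟩ => ⟨j, sSup_setOf_le_eq_of_mem_Ico hu hj⟩⟩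

end Counting

lemma lintegral_Ico_exp_neg_mul {s a b : ℝ} (hs : 0 < s) (hab : a ≤ b) :
    ∫⁻ t in Ico a b, ENNReal.ofReal (Real.exp (-s * t))
      = ENNReal.ofReal ((Real.exp (-s * a) - Real.exp (-s * b)) / s) := by
  rw [setLIntegral_congr Ico_ae_eq_Ioc, ← ofReal_integral_eq_lintegral_ofReal
      (by fun_prop : Continuous fun t => Real.exp (-s * t)).integrableOn_Ioc
      (ae_of_all _ fun _ => (Real.exp_pos _).le),
    ← intervalIntegral.integral_of_le hab,
    intervalIntegral.integral_comp_mul_left Real.exp (neg_ne_zero.2 hs.ne'), integral_exp]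
  congr 1
  rw [smul_eq_mul]
  ring

lemma lintegral_oddIntervals_exp_neg_mul {s : ℝ} {u : ℕ → ℝ} (hs : 0 < s)
    (hu : Monotone u) :
    ∫⁻ t in oddIntervals u, ENNReal.ofReal (Real.exp (-s * t))
      = ∑' j : ℕ, ENNReal.ofReal
          ((Real.exp (-s * u (2 * j + 1)) - Real.exp (-s * u (2 * j + 2))) / s) := by
  have hdisj : Pairwise (Function.onFun Disjoint
      fun j : ℕ => Ico (u (2 * j + 1)) (u (2 * j + 2))) :=
    hu.pairwise_disjoint_on_Ico_succ.comp_of_injective (f := fun j => 2 * j + 1)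
      fun i j h => by simp only at h; omega
  rw [oddIntervals, lintegral_iUnion (fun _ => measurableSet_Ico) hdisj]
  exact tsum_congr fun j => lintegral_Ico_exp_neg_mul hs (hu (by omega))

lemma measurableSet_setOf_mem_oddIntervals {Ω : Type*} [MeasurableSpace Ω]
    {u : ℕ → Ω → ℝ} (hu : ∀ k, Measurable (u k)) :
    MeasurableSet {p : ℝ × Ω | p.1 ∈ oddIntervals (u · p.2)} := by
  simp only [oddIntervals, mem_iUnion, ofPred_exists, mem_Ico, ofPred_and]
  exact .iUnion fun j => (measurableSet_le (by fun_prop) measurable_fst).inter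
    (measurableSet_lt measurable_fst (by fun_prop))

lemma tsum_ofReal_mul_pow {c r : ℝ} (hc : 0 ≤ c) (hr0 : 0 ≤ r) (hr1 : r < 1) :
    ∑' j : ℕ, ENNReal.ofReal (c * r ^ j) = ENNReal.ofReal (c / (1 - r)) := by
  rw [← ENNReal.ofReal_tsum_of_nonneg (fun j => by positivity)
      ((summable_geometric_of_lt_one hr0 hr1).mul_left c),
    tsum_mul_left, tsum_geometric_of_lt_one hr0 hr1, div_eq_mul_inv]

lemma integral_measure_setOf_mem_mul {α Ω : Type*} [MeasurableSpace α] [MeasurableSpace Ω]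
    {ν : Measure α} {μ : Measure Ω} [SFinite ν] [IsFiniteMeasure μ] {A : Ω → Set α}
    (hA : MeasurableSet {p : α × Ω | p.1 ∈ A p.2}) {f : α → ℝ} (hf : Measurable f)
    (hf0 : ∀ t, 0 ≤ f t) :
    ∫ t, (μ {ω | t ∈ A ω}).toReal * f t ∂ν
      = (∫⁻ ω, ∫⁻ t in A ω, ENNReal.ofReal (f t) ∂ν ∂μ).toReal := by
  set g : α × Ω → ℝ≥0∞ := {p | p.1 ∈ A p.2}.indicator fun p => ENNReal.ofReal (f p.1)
  have hg : Measurable g := (ENNReal.measurable_ofReal.comp (hf.comp measurable_fst)).indicator hA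
  have hslice : Measurable fun t => μ {ω | t ∈ A ω} * ENNReal.ofReal (f t) :=
    (measurable_measure_prodMk_left hA).mul (ENNReal.measurable_ofReal.comp hf)
  calc ∫ t, (μ {ω | t ∈ A ω}).toReal * f t ∂ν
      = (∫⁻ t, μ {ω | t ∈ A ω} * ENNReal.ofReal (f t) ∂ν).toReal := by
        rw [← integral_toReal hslice.aemeasurable
          (ae_of_all _ fun t => ENNReal.mul_lt_top (measure_lt_top _ _) ENNReal.ofReal_lt_top)]
        simp_rw [ENNReal.toReal_mul, ENNReal.toReal_ofReal (hf0 _)]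
    _ = (∫⁻ t, ∫⁻ ω, g (t, ω) ∂μ ∂ν).toReal := by
        congr 1
        refine lintegral_congr fun t => ?_
        rw [mul_comm]
        exact (lintegral_indicator_const (hA.preimage measurable_prodMk_left) _).symm
    _ = (∫⁻ ω, ∫⁻ t, g (t, ω) ∂ν ∂μ).toReal := by
        rw [lintegral_lintegral_swap (f := fun t ω => g (t, ω)) hg.aemeasurable]
    _ = (∫⁻ ω, ∫⁻ t in A ω, ENNReal.ofReal (f t) ∂ν ∂μ).toReal := by
        congr 1
        exact lintegral_congr fun ω =>
          lintegral_indicator (f := fun t => ENNReal.ofReal (f t))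
            (hA.preimage measurable_prodMk_right)

section Laplace

variable {Ω : Type*} [MeasurableSpace Ω] {μ : Measure Ω} {X : Ω → ℝ} {t : ℝ}

lemma integrable_exp_mul_of_nonpos_of_nonneg [IsFiniteMeasure μ] (ht : t ≤ 0)
    (hX : AEMeasurable X μ) (hX0 : ∀ᵐ ω ∂μ, 0 ≤ X ω) :
    Integrable (fun ω => Real.exp (t * X ω)) μ :=
  .of_mem_Icc 0 1 (by fun_prop) <| hX0.mono fun ω hω =>
    ⟨(Real.exp_pos _).le, Real.exp_le_one_iff.2 (mul_nonpos_of_nonpos_of_nonneg ht hω)⟩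

lemma mgf_lt_one [IsProbabilityMeasure μ] (hX : Measurable X) (hX0 : ∀ ω, 0 < X ω)
    (ht : t < 0) : mgf X μ t < 1 := by
  have hexp_int := integrable_exp_mul_of_nonpos_of_nonneg ht.le hX.aemeasurable
    (ae_of_all μ fun ω => (hX0 ω).le)
  have hlt ω : Real.exp (t * X ω) < 1 := Real.exp_lt_one_iff.2 (mul_neg_of_neg_of_pos ht (hX0 ω))
  have hpos : 0 < ∫ ω, (1 - Real.exp (t * X ω)) ∂μ := by
    rw [integral_pos_iff_support_of_nonneg (fun ω => sub_nonneg.2 (hlt ω).le)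
      ((integrable_const 1).sub hexp_int)]
    simp [Function.support, sub_eq_zero, (hlt _).ne']
  rw [integral_sub (integrable_const 1) hexp_int] at hpos
  simpa [mgf] using hpos

end Laplace

section SwitchProcess

variable {Ω : Type*} [MeasurableSpace Ω] {μ : Measure Ω} {Tp Tm : ℕ → Ω → ℝ}

lemma measurable_switchTime (hTpm : ∀ i, Measurable (Tp i)) (hTmm : ∀ i, Measurable (Tm i))
    (k : ℕ) : Measurable fun ω => switchTime (Tm · ω) (Tp · ω) k := by
  unfold switchTime
  fun_prop

lemma mgf_switchTime (hTpm : ∀ i, Measurable (Tp i)) (hTmm : ∀ i, Measurable (Tm i))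
    (hindep : iIndepFun (fun i : ℕ ⊕ ℕ => Sum.elim Tp Tm i) μ)
    (hidp : ∀ i, IdentDistrib (Tp i) (Tp 0) μ μ)
    (hidm : ∀ i, IdentDistrib (Tm i) (Tm 0) μ μ)
    (k : ℕ) (t : ℝ) :
    mgf (fun ω => switchTime (Tm · ω) (Tp · ω) k) μ t
      = mgf (Tm 0) μ t ^ ((k + 1) / 2) * mgf (Tp 0) μ t ^ (k / 2) := by
  have hsum : (fun ω => switchTime (Tm · ω) (Tp · ω) k)
      = ∑ i ∈ (Finset.range (k / 2)).disjSum (Finset.range ((k + 1) / 2)),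
          Sum.elim Tp Tm i := by
    ext ω
    rw [Finset.sum_apply, Finset.sum_disjSum, switchTime, add_comm]
    rfl
  rw [hsum, hindep.mgf_sum (by rintro (i | i) <;> simp [hTpm, hTmm]), Finset.prod_disjSum]
  simp only [Sum.elim_inl, Sum.elim_inr]
  rw [Finset.prod_eq_pow_card fun i _ => mgf_congr_of_identDistrib _ _ (hidp i) t,
    Finset.prod_eq_pow_card fun i _ => mgf_congr_of_identDistrib _ _ (hidm i) t,
    Finset.card_range, Finset.card_range, mul_comm]

lemma lintegral_exp_switchTime_sub_exp_switchTime [IsProbabilityMeasure μ]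
    (hTpm : ∀ i, Measurable (Tp i)) (hTmm : ∀ i, Measurable (Tm i))
    (hTp0 : ∀ i ω, 0 < Tp i ω) (hTm0 : ∀ i ω, 0 < Tm i ω)
    (hindep : iIndepFun (fun i : ℕ ⊕ ℕ => Sum.elim Tp Tm i) μ)
    (hidp : ∀ i, IdentDistrib (Tp i) (Tp 0) μ μ)
    (hidm : ∀ i, IdentDistrib (Tm i) (Tm 0) μ μ)
    {s : ℝ} (hs : 0 < s) (j : ℕ) :
    ∫⁻ ω, ENNReal.ofReal ((Real.exp (-s * switchTime (Tm · ω) (Tp · ω) (2 * j + 1))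
        - Real.exp (-s * switchTime (Tm · ω) (Tp · ω) (2 * j + 2))) / s) ∂μ
      = ENNReal.ofReal (mgf (Tm 0) μ (-s) * (1 - mgf (Tp 0) μ (-s)) / s
          * (mgf (Tp 0) μ (-s) * mgf (Tm 0) μ (-s)) ^ j) := by
  have hexp_int k : Integrable (fun ω => Real.exp (-s * switchTime (Tm · ω) (Tp · ω) k)) μ :=
    integrable_exp_mul_of_nonpos_of_nonneg (by linarith)
      (measurable_switchTime hTpm hTmm k).aemeasurable
      (ae_of_all _ fun ω => switchTime_nonneg (hTm0 · ω |>.le) (hTp0 · ω |>.le) k)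
  have hle ω : Real.exp (-s * switchTime (Tm · ω) (Tp · ω) (2 * j + 2))
      ≤ Real.exp (-s * switchTime (Tm · ω) (Tp · ω) (2 * j + 1)) := by
    have := (switchTime_strictMono (hTm0 · ω) (hTp0 · ω)).monotone
      (by omega : 2 * j + 1 ≤ 2 * j + 2)
    exact Real.exp_le_exp.2 (by nlinarith)
  have hdiff_int : Integrable (fun ω =>
      (Real.exp (-s * switchTime (Tm · ω) (Tp · ω) (2 * j + 1))
        - Real.exp (-s * switchTime (Tm · ω) (Tp · ω) (2 * j + 2))) / s) μ :=
    ((hexp_int _).sub (hexp_int _)).div_const s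
  rw [← ofReal_integral_eq_lintegral_ofReal hdiff_int
      (ae_of_all _ fun ω => div_nonneg (sub_nonneg.2 (hle ω)) hs.le),
    integral_div, integral_sub (hexp_int _) (hexp_int _)]
  change ENNReal.ofReal ((mgf (fun ω => switchTime (Tm · ω) (Tp · ω) (2 * j + 1)) μ (-s)
    - mgf (fun ω => switchTime (Tm · ω) (Tp · ω) (2 * j + 2)) μ (-s)) / s) = _
  rw [mgf_switchTime hTpm hTmm hindep hidp hidm, mgf_switchTime hTpm hTmm hindep hidp hidm,
    show (2 * j + 1 + 1) / 2 = j + 1 by omega, show (2 * j + 1) / 2 = j by omega,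
    show (2 * j + 2 + 1) / 2 = j + 1 by omega]
  congr 1
  ring

lemma toReal_lintegral_setLIntegral_oddIntervals_switchTime [IsProbabilityMeasure μ]
    (hTpm : ∀ i, Measurable (Tp i)) (hTmm : ∀ i, Measurable (Tm i))
    (hTp0 : ∀ i ω, 0 < Tp i ω) (hTm0 : ∀ i ω, 0 < Tm i ω)
    (hindep : iIndepFun (fun i : ℕ ⊕ ℕ => Sum.elim Tp Tm i) μ)
    (hidp : ∀ i, IdentDistrib (Tp i) (Tp 0) μ μ)
    (hidm : ∀ i, IdentDistrib (Tm i) (Tm 0) μ μ)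
    {s : ℝ} (hs : 0 < s) :
    (∫⁻ ω, (∫⁻ t in oddIntervals (switchTime (Tm · ω) (Tp · ω)),
        ENNReal.ofReal (Real.exp (-s * t))) ∂μ).toReal
      = mgf (Tm 0) μ (-s) * (1 - mgf (Tp 0) μ (-s))
          / (s * (1 - mgf (Tp 0) μ (-s) * mgf (Tm 0) μ (-s))) := by
  have hSm := measurable_switchTime hTpm hTmm
  have hΨp : mgf (Tp 0) μ (-s) < 1 := mgf_lt_one (hTpm 0) (hTp0 0) (neg_lt_zero.2 hs)
  have hΨm : mgf (Tm 0) μ (-s) < 1 := mgf_lt_one (hTmm 0) (hTm0 0) (neg_lt_zero.2 hs)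
  have hc : 0 ≤ mgf (Tm 0) μ (-s) * (1 - mgf (Tp 0) μ (-s)) / s :=
    div_nonneg (mul_nonneg mgf_nonneg (sub_nonneg.2 hΨp.le)) hs.le
  have hr0 : 0 ≤ mgf (Tp 0) μ (-s) * mgf (Tm 0) μ (-s) := mul_nonneg mgf_nonneg mgf_nonneg
  have hr1 : mgf (Tp 0) μ (-s) * mgf (Tm 0) μ (-s) < 1 :=
    mul_lt_one_of_nonneg_of_lt_one_left mgf_nonneg hΨp hΨm.le
  simp_rw [lintegral_oddIntervals_exp_neg_mul hs
    (switchTime_strictMono (hTm0 · _) (hTp0 · _)).monotone]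
  rw [lintegral_tsum fun j => by fun_prop, tsum_congr
      (lintegral_exp_switchTime_sub_exp_switchTime hTpm hTmm hTp0 hTm0 hindep hidp hidm hs),
    tsum_ofReal_mul_pow hc hr0 hr1, ENNReal.toReal_ofReal (div_nonneg hc (sub_nonneg.2 hr1.le)),
    div_div]

end SwitchProcess

theorem laplace_Pminus_general
    {Ω : Type*} [MeasurableSpace Ω] (μ : Measure Ω) [IsProbabilityMeasure μ]
    (Tp Tm : ℕ → Ω → ℝ)
    (hTpm : ∀ i, Measurable (Tp i)) (hTmm : ∀ i, Measurable (Tm i))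
    (hTp0 : ∀ i ω, 0 < Tp i ω) (hTm0 : ∀ i ω, 0 < Tm i ω)
    (hindep : iIndepFun (fun i : ℕ ⊕ ℕ => Sum.elim Tp Tm i) μ)
    (hidp : ∀ i, IdentDistrib (Tp i) (Tp 0) μ μ)
    (hidm : ∀ i, IdentDistrib (Tm i) (Tm 0) μ μ)
    (S : ℕ → Ω → ℝ)
    (hS : ∀ k ω, S k ω =
      (∑ i ∈ Finset.range ((k + 1) / 2), Tm i ω) + ∑ i ∈ Finset.range (k / 2), Tp i ω)
    (N : ℝ → Ω → ℕ) (hN : ∀ t ω, N t ω = sSup {k | S k ω ≤ t})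
    (Pm : ℝ → ℝ) (hPm : ∀ t, Pm t = (μ {ω | Odd (N t ω)}).toReal)
    (Ψp Ψm : ℝ → ℝ)
    (hΨp : ∀ s, Ψp s = ∫ ω, Real.exp (-s * Tp 0 ω) ∂μ)
    (hΨm : ∀ s, Ψm s = ∫ ω, Real.exp (-s * Tm 0 ω) ∂μ)
    (s : ℝ) (hs : 0 < s) :
    ∫ t in Ioi (0:ℝ), Pm t * Real.exp (-s * t)
      = Ψm s * (1 - Ψp s) / (s * (1 - Ψp s * Ψm s)) := by
  obtain rfl : S = fun k ω => switchTime (Tm · ω) (Tp · ω) k := funext₂ hS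
  obtain rfl : Ψp = fun s => mgf (Tp 0) μ (-s) := funext hΨp
  obtain rfl : Ψm = fun s => mgf (Tm 0) μ (-s) := funext hΨm
  have hmono ω : StrictMono (switchTime (Tm · ω) (Tp · ω)) :=
    switchTime_strictMono (hTm0 · ω) (hTp0 · ω)
  have hPm_odd t :
      Pm t = (μ {ω | t ∈ oddIntervals (switchTime (Tm · ω) (Tp · ω))}).toReal := by
    simp only [hPm, hN, odd_sSup_setOf_le_iff (hmono _).monotone]
  have hpos ω : oddIntervals (switchTime (Tm · ω) (Tp · ω)) ⊆ Ioi 0 :=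
    iUnion_subset fun j t ht => (switchTime_pos (hTm0 · ω) (hTp0 · ω) (by omega)).trans_le ht.1
  simp_rw [hPm_odd]
  rw [integral_measure_setOf_mem_mul
    (measurableSet_setOf_mem_oddIntervals (measurable_switchTime hTpm hTmm)) (by fun_prop)
    fun _ => (Real.exp_pos _).le]
  simp_rw [Measure.restrict_restrict_of_subset (hpos _)]
  exact toReal_lintegral_setLIntegral_oddIntervals_switchTime hTpm hTmm hTp0 hTm0 hindep hidp
    hidm hs

/-- Laplace transform of `P₋(t) = P(D(t) = 1 | δ = −1)` for the
non-stationary switch process started in state `−1`: the first sojourn is `T₋`, the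
process alternates, `D(t) = 1` iff the number of switches `N(t)` in `(0,t]` is odd, and
`ℒ(P₋)(s) = Ψ₋(s)(1 − Ψ₊(s)) / (s (1 − Ψ₊(s) Ψ₋(s)))`. -/
theorem laplace_Pminus
    {Ω : Type*} [MeasurableSpace Ω] (μ : Measure Ω) [IsProbabilityMeasure μ]
    (Tp Tm : ℕ → Ω → ℝ)
    (hTpm : ∀ i, Measurable (Tp i)) (hTmm : ∀ i, Measurable (Tm i))
    (hTp0 : ∀ i ω, 0 < Tp i ω) (hTm0 : ∀ i ω, 0 < Tm i ω)
    (hindep : iIndepFun (fun i : ℕ ⊕ ℕ => Sum.elim Tp Tm i) μ)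
    (hidp : ∀ i, IdentDistrib (Tp i) (Tp 0) μ μ)
    (hidm : ∀ i, IdentDistrib (Tm i) (Tm 0) μ μ)
    (hcontp : ∀ c : ℝ, μ {ω | Tp 0 ω = c} = 0)
    (hcontm : ∀ c : ℝ, μ {ω | Tm 0 ω = c} = 0)
    (S : ℕ → Ω → ℝ)
    (hS : ∀ k ω, S k ω =
      (∑ i ∈ Finset.range ((k + 1) / 2), Tm i ω) + ∑ i ∈ Finset.range (k / 2), Tp i ω)
    (N : ℝ → Ω → ℕ) (hN : ∀ t ω, N t ω = sSup {k | S k ω ≤ t})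
    (Pm : ℝ → ℝ) (hPm : ∀ t, Pm t = (μ {ω | Odd (N t ω)}).toReal)
    (Ψp Ψm : ℝ → ℝ)
    (hΨp : ∀ s, Ψp s = ∫ ω, Real.exp (-s * Tp 0 ω) ∂μ)
    (hΨm : ∀ s, Ψm s = ∫ ω, Real.exp (-s * Tm 0 ω) ∂μ)
    (s : ℝ) (hs : 0 < s) :
    ∫ t in Ioi (0:ℝ), Pm t * Real.exp (-s * t)
      = Ψm s * (1 - Ψp s) / (s * (1 - Ψp s * Ψm s)) :=
  laplace_Pminus_general μ Tp Tm hTpm hTmm hTp0 hTm0 hindep hidp hidm S hS N hN Pm hPm Ψp Ψm hΨp hΨm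
    s hs
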